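/- arXiv:1608.05335 — 2 statements merged into one kernel-verified Lean document; each statement's English description precedes it below -/
import Mathlib

section
/- Let (x(t), y(t)) be a smooth planar curve and λ ≠ 0. Define c'(t) = (x'(t), y'(t), (λ² − x'(t)² − y'(t)²)/(2λ)) and n(t) = (2λ/(λ²+x'(t)²+y'(t)²))·(cos(at+b) n₁(t) + sin(at+b) n₂(t)) where n₁(t) = (1/(2λ))·(−λ²+x'(t)²−y'(t)², 2x'(t)y'(t), 2λx'(t)) and n₂(t) = (1/(2λ))·(2x'(t)y'(t), −λ²−x'(t)²+y'(t)², 2λy'(t)). Then n(t) is a unit vector orthogonal to c'(t) for every t. -/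
open Matrix

theorem rotating_normal_unit_orthogonal (x y : ℝ → ℝ)
    (hx : ContDiff ℝ (⊤ : ℕ∞) x) (hy : ContDiff ℝ (⊤ : ℕ∞) y)
    (a b lam : ℝ) (hlam : lam ≠ 0) (t : ℝ) :
    let x' := deriv x t
    let y' := deriv y t
    let c' : Fin 3 → ℝ := ![x', y', (lam ^ 2 - x' ^ 2 - y' ^ 2) / (2 * lam)]
    let n₁ : Fin 3 → ℝ :=
      (1 / (2 * lam)) • ![-lam ^ 2 + x' ^ 2 - y' ^ 2, 2 * x' * y', 2 * lam * x']
    let n₂ : Fin 3 → ℝ :=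
      (1 / (2 * lam)) • ![2 * x' * y', -lam ^ 2 - x' ^ 2 + y' ^ 2, 2 * lam * y']
    let n : Fin 3 → ℝ :=
      (2 * lam / (lam ^ 2 + x' ^ 2 + y' ^ 2)) •
        (Real.cos (a * t + b) • n₁ + Real.sin (a * t + b) • n₂)
    n ⬝ᵥ n = 1 ∧ n ⬝ᵥ c' = 0 := by
  intro x' y' c' n₁ n₂ n
  have hden : lam ^ 2 + x' ^ 2 + y' ^ 2 ≠ 0 := by positivity
  have hpy : Real.sin (a * t + b) ^ 2 + Real.cos (a * t + b) ^ 2 = 1 :=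
    Real.sin_sq_add_cos_sq _
  constructor
  · show n ⬝ᵥ n = 1
    simp only [n, n₁, n₂, dotProduct, Fin.sum_univ_three, Pi.smul_apply, Pi.add_apply,
      Matrix.cons_val_zero, Matrix.cons_val_one, Matrix.head_cons,
      Matrix.cons_val_two, Matrix.tail_cons, smul_eq_mul]
    field_simp
    linear_combination ((lam ^ 2 + x' ^ 2 + y' ^ 2) ^ 2) * hpy
  · show n ⬝ᵥ c' = 0
    simp only [n, n₁, n₂, c', dotProduct, Fin.sum_univ_three, Pi.smul_apply, Pi.add_apply,
      Matrix.cons_val_zero, Matrix.cons_val_one, Matrix.head_cons,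
      Matrix.cons_val_two, Matrix.tail_cons, smul_eq_mul]
    field_simp
    ring
end

section
/- Let a be a positive integer and let P(w) = i w (w^{a+2} + w^a − w² + 1), Q(w) = w^{a+2} − w^a − w² − 1. Then P and Q have no common root in ℂ. -/
theorem enneper_gauss_no_common_root (a : ℕ) (ha : 0 < a) :
    ∀ w : ℂ,
      ¬ (Complex.I * w * (w ^ (a + 2) + w ^ a - w ^ 2 + 1) = 0 ∧
         w ^ (a + 2) - w ^ a - w ^ 2 - 1 = 0) := by
  intro w ⟨h1, h2⟩
  rcases mul_eq_zero.mp h1 with h | hb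
  · rcases mul_eq_zero.mp h with hI | hw
    · exact Complex.I_ne_zero hI
    · rw [hw] at h2
      simp [zero_pow ha.ne'] at h2
  · -- hb : w ^ (a+2) + w^a - w^2 + 1 = 0
    have hpa : w ^ a = -1 := by linear_combination (hb - h2) / 2
    have hsplit : w ^ (a + 2) = w ^ a * w ^ 2 := pow_add w a 2
    have hw2 : w ^ 2 = 0 := by
      rw [hsplit, hpa] at hb
      linear_combination -hb / 2
    have hw : w = 0 := by
      have := pow_eq_zero_iff (n := 2) (by norm_num) |>.mp hw2
      exact this
    rw [hw, zero_pow ha.ne'] at hpa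
    exact absurd hpa (by norm_num)
end
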